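/- arXiv:2010.05360 — 7 statements merged into one kernel-verified Lean document; each statement's English description precedes it below -/
import Mathlib

section
/- Let f₀, f₁ : ℤ × Fin 2^(m-1) → ℝ be images whose support is bounded below in the first coordinate (there exists b ∈ ℤ with f_i(h,t) = 0 for all h ≤ b). Let g = S[f₀,f₁] where S[f₀,f₁](h,2t) = f₀(h,t) + f₁(h+t,t) and S[f₀,f₁](h,2t+1) = f₀(h,t) + f₁(h+t+1,t). Then for all (h,s): f₀(h,s) = Σ_{k ≤ h-1} [g(k+1, 2s) − g(k, 2s+1)] and f₁(h,s) = Σ_{k ≤ h-1} [g(k−s, 2s+1) − g(k−s, 2s)], where the sums are over all integers k ≤ h−1 (finite sums since the supports are bounded below). -/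
/-- An image on the half-strip: support bounded below in the first coordinate. -/
def BddBelowSupp {k : ℕ} (f : ℤ × Fin k → ℝ) : Prop :=
  ∃ b : ℤ, ∀ i ≤ b, ∀ j, f (i, j) = 0

/-- Halving of a slope index: local slope of the sub-section. -/
def halfIdx {m : ℕ} (s : Fin (2 ^ (m + 1))) : Fin (2 ^ m) :=
  ⟨s.val / 2, by have h1 := s.isLt; have h2 : 2 ^ (m + 1) = 2 ^ m * 2 := pow_succ 2 m; omega⟩

/-- Doubling of a slope index (even slope). -/
def dbl0 {m : ℕ} (s : Fin (2 ^ m)) : Fin (2 ^ (m + 1)) :=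
  ⟨2 * s.val, by have h1 := s.isLt; have h2 : 2 ^ (m + 1) = 2 ^ m * 2 := pow_succ 2 m; omega⟩

/-- Doubling of a slope index, plus one (odd slope). -/
def dbl1 {m : ℕ} (s : Fin (2 ^ m)) : Fin (2 ^ (m + 1)) :=
  ⟨2 * s.val + 1, by have h1 := s.isLt; have h2 : 2 ^ (m + 1) = 2 ^ m * 2 := pow_succ 2 m; omega⟩

/-- The single-level ADRT merge operator `S`:
`S[f₀,f₁](h,2t) = f₀(h,t) + f₁(h+t,t)` and `S[f₀,f₁](h,2t+1) = f₀(h,t) + f₁(h+t+1,t)`. -/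
def Smerge (m : ℕ) (f₀ f₁ : ℤ × Fin (2 ^ m) → ℝ) : ℤ × Fin (2 ^ (m + 1)) → ℝ :=
  fun p =>
    f₀ (p.1, halfIdx p.2) +
      f₁ (p.1 + ((halfIdx p.2).val : ℤ) + ((p.2.val % 2 : ℕ) : ℤ), halfIdx p.2)

/-!
Along the slopes `2s` and `2s + 1` the merged image satisfies
`g(k+1, 2s) - g(k, 2s+1) = f₀(k+1, s) - f₀(k, s)` and
`g(k-s, 2s+1) - g(k-s, 2s) = f₁(k+1, s) - f₁(k, s)`: the other summand cancels.
Both inversion sums therefore telescope, and they are finite and start from `0`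
because the supports are bounded below.
-/

lemma Int.sum_Ico_sub {M : Type*} [AddCommGroup M] (F : ℤ → M) {a b : ℤ} (hab : a ≤ b) :
    ∑ k ∈ Finset.Ico a b, (F (k + 1) - F k) = F b - F a := by
  induction b, hab using Int.leInduction with
  | base => simp
  | succ n hn ih =>
    rw [Finset.Ico_add_one_right_eq_Icc, Finset.sum_Icc_eq_sum_Ico_add _ hn, ih]
    abel

lemma Int.finsum_mem_Iio_sub {M : Type*} [AddCommGroup M] (F : ℤ → M) {b : ℤ}
    (hb : ∀ i ≤ b, F i = 0) (h : ℤ) :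
    ∑ᶠ k ∈ Set.Iio h, (F (k + 1) - F k) = F h := by
  have hc : ∀ i ≤ min b h, F i = 0 := fun i hi => hb i (hi.trans (min_le_left b h))
  rw [finsum_mem_eq_sum_of_subset _ (t := Finset.Ico (min b h) h),
    Int.sum_Ico_sub F (min_le_right b h), hc _ le_rfl, sub_zero]
  · rintro k ⟨hk, hne⟩
    refine Finset.mem_coe.2 (Finset.mem_Ico.2 ⟨?_, hk⟩)
    by_contra hlt
    exact hne (by simp [hc k (by omega), hc (k + 1) (by omega)])
  · simpa using Set.Ico_subset_Iio_self

section Smerge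

variable {m : ℕ} (f₀ f₁ : ℤ × Fin (2 ^ m) → ℝ) (k : ℤ) (s : Fin (2 ^ m))

lemma halfIdx_dbl0 : halfIdx (dbl0 s) = s := by
  ext; simp [halfIdx, dbl0]

lemma halfIdx_dbl1 : halfIdx (dbl1 s) = s := by
  ext; simp [halfIdx, dbl1]; omega

lemma Smerge_dbl0 : Smerge m f₀ f₁ (k, dbl0 s) = f₀ (k, s) + f₁ (k + s, s) := by
  simp only [Smerge, halfIdx_dbl0]
  simp [dbl0]

lemma Smerge_dbl1 : Smerge m f₀ f₁ (k, dbl1 s) = f₀ (k, s) + f₁ (k + s + 1, s) := by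
  simp only [Smerge, halfIdx_dbl1]
  simp [dbl1]

end Smerge

/-- Exactness of the single-level inversion formula: for half-strip images
`f₀, f₁`, the values of the pair are recovered from `g = S[f₀,f₁]` by the
back-substitution sums over `k ≤ h - 1`. -/
theorem Smerge_inversion_formula (m : ℕ) (f₀ f₁ : ℤ × Fin (2 ^ m) → ℝ)
    (h₀ : BddBelowSupp f₀) (h₁ : BddBelowSupp f₁) (h : ℤ) (s : Fin (2 ^ m)) :
    f₀ (h, s) = ∑ᶠ k ∈ Set.Iio h,
        (Smerge m f₀ f₁ (k + 1, dbl0 s) - Smerge m f₀ f₁ (k, dbl1 s)) ∧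
    f₁ (h, s) = ∑ᶠ k ∈ Set.Iio h,
        (Smerge m f₀ f₁ (k - (s.val : ℤ), dbl1 s)
          - Smerge m f₀ f₁ (k - (s.val : ℤ), dbl0 s)) := by
  obtain ⟨b₀, hb₀⟩ := h₀
  obtain ⟨b₁, hb₁⟩ := h₁
  constructor
  · rw [← Int.finsum_mem_Iio_sub (fun k => f₀ (k, s)) (fun i hi => hb₀ i hi s) h]
    refine finsum_mem_congr rfl fun k _ => ?_
    rw [Smerge_dbl0, Smerge_dbl1, add_right_comm k 1]
    ring
  · rw [← Int.finsum_mem_Iio_sub (fun k => f₁ (k, s)) (fun i hi => hb₁ i hi s) h]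
    refine finsum_mem_congr rfl fun k _ => ?_
    rw [Smerge_dbl0, Smerge_dbl1, sub_add_cancel]
    ring
end

section
/- The single-level merge operator S : (half-strip images of width 2^(m-1))² → (half-strip images of width 2^m), defined by S[f₀,f₁](h,2t) = f₀(h,t) + f₁(h+t,t) and S[f₀,f₁](h,2t+1) = f₀(h,t) + f₁(h+t+1,t), is injective on pairs of images whose support is bounded below in the first coordinate. -/
/-
`S` is linear, so it suffices to show that its kernel is trivial on half-strip images. If
`S[f₀,f₁] = 0`, comparing the even slope `2t` at offset `h - t` with the odd slope `2t+1` at the same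
offset gives `f₁(h+1,t) = f₁(h,t)`: each row of `f₁` is constant in `h`, hence zero because it vanishes
far below. The even equation then forces `f₀ = 0`.
-/

theorem BddBelowSupp.sub {k : ℕ} {f g : ℤ × Fin k → ℝ} (hf : BddBelowSupp f)
    (hg : BddBelowSupp g) : BddBelowSupp (f - g) := by
  obtain ⟨b, hb⟩ := hf
  obtain ⟨c, hc⟩ := hg
  refine ⟨min b c, fun i hi j => ?_⟩
  simp [hb i (hi.trans (min_le_left b c)) j, hc i (hi.trans (min_le_right b c)) j]

theorem Smerge_sub (m : ℕ) (f₀ f₁ g₀ g₁ : ℤ × Fin (2 ^ m) → ℝ) :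
    Smerge m (f₀ - g₀) (f₁ - g₁) = Smerge m f₀ f₁ - Smerge m g₀ g₁ := by
  funext p
  simp only [Smerge, Pi.sub_apply]
  ring

theorem Smerge_apply_dbl0 (m : ℕ) (f₀ f₁ : ℤ × Fin (2 ^ m) → ℝ) (h : ℤ) (t : Fin (2 ^ m)) :
    Smerge m f₀ f₁ (h, dbl0 t) = f₀ (h, t) + f₁ (h + t, t) := by
  have ht : halfIdx (dbl0 t) = t := Fin.ext (by simp [halfIdx, dbl0])
  simp only [Smerge, ht]
  simp [dbl0]

theorem Smerge_apply_dbl1 (m : ℕ) (f₀ f₁ : ℤ × Fin (2 ^ m) → ℝ) (h : ℤ) (t : Fin (2 ^ m)) :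
    Smerge m f₀ f₁ (h, dbl1 t) = f₀ (h, t) + f₁ (h + t + 1, t) := by
  have ht : halfIdx (dbl1 t) = t := Fin.ext (by simp only [halfIdx, dbl1]; omega)
  simp only [Smerge, ht]
  simp [dbl1, Nat.add_mod]

theorem eq_zero_of_Smerge_eq_zero {m : ℕ} {f₀ f₁ : ℤ × Fin (2 ^ m) → ℝ}
    (hf₁ : BddBelowSupp f₁) (hS : Smerge m f₀ f₁ = 0) : f₀ = 0 ∧ f₁ = 0 := by
  have heven (h t) := Smerge_apply_dbl0 m f₀ f₁ h t
  have hodd (h t) := Smerge_apply_dbl1 m f₀ f₁ h t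
  simp only [hS, Pi.zero_apply] at heven hodd
  have hrow (t : Fin (2 ^ m)) : Function.Periodic (fun i => f₁ (i, t)) 1 := fun i => by
    have := (heven (i - t) t).symm.trans (hodd (i - t) t)
    simp only [sub_add_cancel] at this
    linarith
  obtain ⟨b, hb⟩ := hf₁
  have h₁ : f₁ = 0 := funext fun ⟨i, t⟩ => by
    simpa [hb b le_rfl t] using
      ((hrow t).int_mul_eq i).trans ((hrow t).int_mul_eq b).symm
  refine ⟨funext fun ⟨h, t⟩ => ?_, h₁⟩
  simpa [h₁] using (heven h t).symm

theorem Smerge_injective_general (m : ℕ) (f₀ f₁ g₀ g₁ : ℤ × Fin (2 ^ m) → ℝ)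
    (hf₁ : BddBelowSupp f₁)
    (hg₁ : BddBelowSupp g₁)
    (heq : Smerge m f₀ f₁ = Smerge m g₀ g₁) :
    f₀ = g₀ ∧ f₁ = g₁ := by
  have hS : Smerge m (f₀ - g₀) (f₁ - g₁) = 0 := by rw [Smerge_sub, heq, sub_self]
  obtain ⟨h₀, h₁⟩ := eq_zero_of_Smerge_eq_zero (hf₁.sub hg₁) hS
  exact ⟨sub_eq_zero.1 h₀, sub_eq_zero.1 h₁⟩

/-- The merge operator `S` is injective on pairs of half-strip images. -/
theorem Smerge_injective (m : ℕ) (f₀ f₁ g₀ g₁ : ℤ × Fin (2 ^ m) → ℝ)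
    (hf₀ : BddBelowSupp f₀) (hf₁ : BddBelowSupp f₁)
    (hg₀ : BddBelowSupp g₀) (hg₁ : BddBelowSupp g₁)
    (heq : Smerge m f₀ f₁ = Smerge m g₀ g₁) :
    f₀ = g₀ ∧ f₁ = g₁ :=
  Smerge_injective_general m f₀ f₁ g₀ g₁ hf₁ hg₁ heq
end

section
/- The single-level merge operator S is surjective onto half-strip images of width 2^m: for every g : ℤ × Fin 2^m → ℝ with support bounded below in the first coordinate, there exist f₀, f₁ : ℤ × Fin 2^(m-1) → ℝ with support bounded below such that S[f₀,f₁] = g, where S[f₀,f₁](h,2t) = f₀(h,t) + f₁(h+t,t) and S[f₀,f₁](h,2t+1) = f₀(h,t) + f₁(h+t+1,t). -/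
/-- The merge operator `S` is surjective onto half-strip images of width `2^(m+1)`. -/
theorem Smerge_surjective (m : ℕ) (g : ℤ × Fin (2 ^ (m + 1)) → ℝ)
    (hg : BddBelowSupp g) :
    ∃ f₀ f₁ : ℤ × Fin (2 ^ m) → ℝ,
      BddBelowSupp f₀ ∧ BddBelowSupp f₁ ∧ Smerge m f₀ f₁ = g := by
  obtain ⟨b, hb⟩ := hg
  set D : Fin (2 ^ m) → ℤ → ℝ := fun s j => g (j, dbl1 s) - g (j, dbl0 s) with hD
  set T : Fin (2 ^ m) → ℤ → ℝ := fun s h => ∑ j ∈ Finset.Ico b h, D s j with hT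
  have hTzero : ∀ s h, h ≤ b → T s h = 0 := by
    intro s h hh
    simp [hT, Finset.Ico_eq_empty_of_le hh]
  have hTstep : ∀ s h, T s (h + 1) - T s h = D s h := by
    intro s h
    rcases le_or_gt b h with hbh | hbh
    · have hins : Finset.Ico b (h + 1) = insert h (Finset.Ico b h) := by
        ext x; simp only [Finset.mem_Ico, Finset.mem_insert]; omega
      have hnot : h ∉ Finset.Ico b h := by simp
      simp only [hT]
      rw [hins, Finset.sum_insert hnot]
      ring
    · rw [hTzero s h (by omega), hTzero s (h + 1) (by omega)]
      simp [hD, hb h (by omega)]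
  refine ⟨fun p => g (p.1, dbl0 p.2) - T p.2 p.1,
          fun p => T p.2 (p.1 - (p.2.val : ℤ)), ⟨b, ?_⟩, ⟨b, ?_⟩, ?_⟩
  · intro i hi j
    show g (i, dbl0 j) - T j i = 0
    rw [hb i hi, hTzero j i hi, sub_zero]
  · intro i hi j
    show T j (i - (j.val : ℤ)) = 0
    exact hTzero j (i - (j.val : ℤ)) (by have := j.val.cast_nonneg (α := ℤ); omega)
  · funext p
    obtain ⟨h, t⟩ := p
    simp only [Smerge]
    rcases Nat.even_or_odd t.val with ⟨s, hs⟩ | ⟨s, hs⟩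
    · have hmod : t.val % 2 = 0 := by omega
      have hhalf : (halfIdx t).val = s := by simp [halfIdx]; omega
      have ht : dbl0 (halfIdx t) = t := by
        apply Fin.ext; simp [dbl0, hhalf]; omega
      simp only [hmod, hhalf, Nat.cast_zero, add_zero]
      rw [ht, show h + (s : ℤ) - (s : ℤ) = h by ring]
      ring
    · have hmod : t.val % 2 = 1 := by omega
      have hhalf : (halfIdx t).val = s := by simp [halfIdx]; omega
      have ht : dbl1 (halfIdx t) = t := by
        apply Fin.ext; simp [dbl1, hhalf]; omega
      simp only [hmod, hhalf, Nat.cast_one]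
      rw [show h + (s : ℤ) + 1 - (s : ℤ) = h + 1 by ring]
      have key : T (halfIdx t) (h + 1) - T (halfIdx t) h
          = g (h, dbl1 (halfIdx t)) - g (h, dbl0 (halfIdx t)) := hTstep (halfIdx t) h
      rw [ht] at key
      linarith
end

section
/- For the Kronecker delta image δ_{h,s} concentrated at (h,s) ∈ ℤ × Fin 2^m, the preimage pair (g₀, g₁) = S⁻¹[σ·δ_{h,s}] (σ ∈ {±1}) under the merge operator S is given by g_b(h',s') = σ_b · [s' = s_b] · [h' ≥ h_b] for b ∈ {0,1}, where (h₀,s₀,σ₀) = (h + (s mod 2), ⌊s/2⌋, σ·(-1)^(s mod 2)) and (h₁,s₁,σ₁) = (h + ⌊s/2⌋ + 1, ⌊s/2⌋, σ·(-1)^((s mod 2)+1)). That is, S[g₀,g₁] = σ·δ_{h,s}. -/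
/-- The Kronecker delta image concentrated at `(h, s)`. -/
def deltaImg {k : ℕ} (h : ℤ) (s : Fin k) : ℤ × Fin k → ℝ :=
  fun p => if p = (h, s) then 1 else 0

/-- The preimage pair of `σ·δ_{h,s}` under the merge operator `S` is the pair of
signed half-line indicators `g_b(h',s') = σ_b·[s' = s_b]·[h' ≥ h_b]`, where
`(h₀,s₀,σ₀) = (h + (s mod 2), ⌊s/2⌋, σ·(-1)^(s mod 2))` and
`(h₁,s₁,σ₁) = (h + ⌊s/2⌋ + 1, ⌊s/2⌋, σ·(-1)^((s mod 2)+1))`. -/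
theorem Smerge_inv_delta (m : ℕ) (h : ℤ) (s : Fin (2 ^ (m + 1)))
    (σ : ℝ) (hσ : σ = 1 ∨ σ = -1)
    (g₀ g₁ : ℤ × Fin (2 ^ m) → ℝ)
    (hg₀ : ∀ (h' : ℤ) (s' : Fin (2 ^ m)),
      g₀ (h', s') = (σ * (-1) ^ (s.val % 2)) *
        (if s' = halfIdx s ∧ h + ((s.val % 2 : ℕ) : ℤ) ≤ h' then 1 else 0))
    (hg₁ : ∀ (h' : ℤ) (s' : Fin (2 ^ m)),
      g₁ (h', s') = (σ * (-1) ^ (s.val % 2 + 1)) *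
        (if s' = halfIdx s ∧ h + ((halfIdx s).val : ℤ) + 1 ≤ h' then 1 else 0)) :
    Smerge m g₀ g₁ = fun p => σ * deltaImg h s p := by
  funext p
  obtain ⟨h', s'⟩ := p
  simp only [Smerge, hg₀, hg₁, deltaImg, halfIdx, Prod.ext_iff, Fin.ext_iff]
  have hmod : s.val % 2 = 0 ∨ s.val % 2 = 1 := Nat.mod_two_eq_zero_or_one _
  have hmod' : s'.val % 2 = 0 ∨ s'.val % 2 = 1 := Nat.mod_two_eq_zero_or_one _
  rcases hmod with hs | hs <;> rcases hmod' with hs' | hs' <;>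
    simp only [hs, hs', pow_zero, pow_one, pow_succ, Nat.cast_zero, Nat.cast_one,
      mul_one, mul_neg, neg_mul, neg_neg, one_mul, add_zero] <;>
    split_ifs <;> push_cast at * <;> (try ring) <;> (exfalso; omega)
end

section
/- If f : ℤ × Fin 2^n → ℝ is supported in the square I_{2^n} × I_{2^n} (i.e. f(i,j) = 0 unless 0 ≤ i < 2^n), then its partial ADRT R^n_m[f] is supported in E^n_m = {(h,s) : −(s mod 2^m) ≤ h ≤ 2^n − 1}. -/
/-- Digital lines, defined recursively on the depth `m`.  `Dline m ℓ h s` is the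
digital line of height `h` and local slope `s` in the `ℓ`-th width-`2^m` section:
`D_0⟦h,ℓ⟧ = {(h,ℓ)}`, `D_{m,ℓ}⟦h,2t⟧ = D_{m-1,2ℓ}⟦h,t⟧ ∪ D_{m-1,2ℓ+1}⟦h+t,t⟧`,
`D_{m,ℓ}⟦h,2t+1⟧ = D_{m-1,2ℓ}⟦h,t⟧ ∪ D_{m-1,2ℓ+1}⟦h+t+1,t⟧`. -/
def Dline : (m : ℕ) → ℕ → ℤ → Fin (2 ^ m) → Finset (ℤ × ℕ)
  | 0, ℓ, h, _ => {(h, ℓ)}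
  | m + 1, ℓ, h, s =>
      Dline m (2 * ℓ) h (halfIdx s) ∪
        Dline m (2 * ℓ + 1) (h + ((halfIdx s).val : ℤ) + ((s.val % 2 : ℕ) : ℤ)) (halfIdx s)

/-- The digital line `D^n_m⟦h,s⟧` with globally indexed slope `s ∈ Fin 2^n`:
the section is `ℓ = ⌊s/2^m⌋` and the local slope is `s mod 2^m`. -/
def DlineG (n m : ℕ) (h : ℤ) (s : Fin (2 ^ n)) : Finset (ℤ × ℕ) :=
  Dline m (s.val / 2 ^ m) h ⟨s.val % 2 ^ m, Nat.mod_lt _ (Nat.two_pow_pos m)⟩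

/-- Extension of an image on `ℤ × Fin 2^n` by zero to `ℤ × ℕ`. -/
def fext {n : ℕ} (f : ℤ × Fin (2 ^ n) → ℝ) : ℤ × ℕ → ℝ :=
  fun p => if h : p.2 < 2 ^ n then f (p.1, ⟨p.2, h⟩) else 0

/-- The level-`m` single-quadrant ADRT: sum of image values over digital lines. -/
def Radon (n m : ℕ) (f : ℤ × Fin (2 ^ n) → ℝ) : ℤ × Fin (2 ^ n) → ℝ :=
  fun p => ∑ q ∈ DlineG n m p.1 p.2, fext f q

/-- The dual digital line `D'^n_m⟦i,j⟧`: the set of `(h,s)` whose digital line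
passes through `(i,j)`. -/
def Ddual (n m : ℕ) (i : ℤ) (j : Fin (2 ^ n)) : Set (ℤ × Fin (2 ^ n)) :=
  {hs | (i, (j : ℕ)) ∈ DlineG n m hs.1 hs.2}

/-- The level-`m` back-projection: sum over the dual digital line. -/
noncomputable def RadonBack (n m : ℕ) (g : ℤ × Fin (2 ^ n) → ℝ) : ℤ × Fin (2 ^ n) → ℝ :=
  fun p => ∑ᶠ q ∈ Ddual n m p.1 p.2, g q

lemma Dline_mem_bounds : ∀ (m : ℕ) (ℓ : ℕ) (h : ℤ) (s : Fin (2 ^ m)) (i : ℤ) (j : ℕ),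
    (i, j) ∈ Dline m ℓ h s → h ≤ i ∧ i ≤ h + (s.val : ℤ) := by
  intro m
  induction m with
  | zero =>
    intro ℓ h s i j hij
    simp [Dline] at hij
    have : s.val = 0 := by omega
    omega
  | succ m ih =>
    intro ℓ h s i j hij
    simp only [Dline, Finset.mem_union] at hij
    have hhalf : (halfIdx s).val = s.val / 2 := rfl
    rcases hij with hij | hij
    · have := ih _ _ _ _ _ hij
      omega
    · have := ih _ _ _ _ _ hij
      have hmod : s.val % 2 < 2 := Nat.mod_lt _ (by norm_num)
      push_cast at this ⊢
      omega

theorem Radon_support' (n m : ℕ) (hm : m ≤ n) (f : ℤ × Fin (2 ^ n) → ℝ)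
    (hf : ∀ (i : ℤ) (j : Fin (2 ^ n)), (i < 0 ∨ (2 ^ n : ℤ) ≤ i) → f (i, j) = 0)
    (h : ℤ) (s : Fin (2 ^ n)) (hns : Radon n m f (h, s) ≠ 0) :
    -(((s.val % 2 ^ m : ℕ)) : ℤ) ≤ h ∧ h ≤ (2 ^ n : ℤ) - 1 := by
  obtain ⟨⟨i, j⟩, hmem, hne⟩ : ∃ q ∈ DlineG n m h s, fext f q ≠ 0 := by
    by_contra hc
    push_neg at hc
    exact hns (Finset.sum_eq_zero hc)
  have hbounds := Dline_mem_bounds m _ h _ i j hmem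
  have hi : 0 ≤ i ∧ i ≤ (2 ^ n : ℤ) - 1 := by
    by_contra hc
    apply hne
    unfold fext
    dsimp only
    split
    · apply hf; omega
    · rfl
  constructor
  · have := hbounds.2
    simp only at this
    omega
  · omega

/-- If `f` is supported in the square `{0,…,2^n−1} × Fin 2^n`, then its partial
ADRT `R^n_m[f]` is supported in `E^n_m = {(h,s) : −(s mod 2^m) ≤ h ≤ 2^n − 1}`. -/
theorem Radon_support (n m : ℕ) (hm : m ≤ n) (f : ℤ × Fin (2 ^ n) → ℝ)
    (hf : ∀ (i : ℤ) (j : Fin (2 ^ n)), (i < 0 ∨ (2 ^ n : ℤ) ≤ i) → f (i, j) = 0)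
    (h : ℤ) (s : Fin (2 ^ n)) (hns : Radon n m f (h, s) ≠ 0) :
    -(((s.val % 2 ^ m : ℕ)) : ℤ) ≤ h ∧ h ≤ (2 ^ n : ℤ) - 1 :=
  Radon_support' n m hm f hf h s hns
end

section
/- For each k ≥ 1, the cutoff-composed operator f ↦ R^n ∘ 𝟙_k ∘ (R^n)⁻¹ [f] fails to approximate the identity: its deviation from the identity in the induced sup-norm satisfies ‖R^n 𝟙_k (R^n)⁻¹ − Id‖_∞ ≥ c·k^n for some constant c > 0 depending only on n. -/
/-!
Write `b(j)` for the binary digit sum of a column `j`. The image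
`(i, j) ↦ (-1)^(n + b(j)) · C(i - j + b(j) - c - 1, n - 1)` is mapped by `R^n` to the point mass at
`(c, 2^n - 1)`: splitting a digital line into its two halves, Pascal's rule telescopes the sum over
it one depth at a time. The digital line of slope `2^n - 1` is the diagonal, so with
`K = (k + 1) 2^n` the one starting at height `K - 2^n + 1` leaves the cutoff rectangle only at
`(K, 2^n - 1)`; at its starting point `R^n 𝟙_k (R^n)⁻¹ f` and `f` therefore differ by
`(R^n)⁻¹ f (K, 2^n - 1)`. For `f` the sum of the `k` point masses at heights `-k < c ≤ 0` this is a
sum of `k` binomial coefficients `C(m, n - 1)` with `m ≥ k + n - 1`, hence at least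
`k^n / (n - 1)!`. For `n = 0` the transform is the identity and a point mass below the rectangle is
cut off entirely.
-/
def bitSum (j : ℕ) : ℕ := (Nat.digits 2 j).sum

@[simp] lemma bitSum_zero : bitSum 0 = 0 := rfl

lemma bitSum_eq (j : ℕ) : bitSum j = j % 2 + bitSum (j / 2) := by
  rcases Nat.eq_zero_or_pos j with rfl | hj
  · rfl
  · rw [bitSum, Nat.digits_def' one_lt_two hj, List.sum_cons, bitSum]

lemma bitSum_le (j : ℕ) : bitSum j ≤ j := Nat.digit_sum_le 2 j

lemma bitSum_two_mul (l : ℕ) : bitSum (2 * l) = bitSum l := by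
  rw [bitSum_eq]; simp

lemma bitSum_two_mul_add_one (l : ℕ) : bitSum (2 * l + 1) = bitSum l + 1 := by
  rw [bitSum_eq, show (2 * l + 1) / 2 = l by omega]; omega

lemma bitSum_two_pow_sub_one (n : ℕ) : bitSum (2 ^ n - 1) = n := by
  induction n with
  | zero => rfl
  | succ n ih =>
    have hsplit : 2 ^ (n + 1) - 1 = 2 * (2 ^ n - 1) + 1 := by
      have := Nat.one_le_two_pow (n := n); rw [pow_succ]; omega
    rw [hsplit, bitSum_two_mul_add_one, ih]

/-- `pascalSeq (r + 1) x = x.choose r` (zero for `x < 0`), extended to `r = 0` by the point mass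
at `-1` so that Pascal's rule `pascalSeq_succ_succ` holds for every `r`. -/
def pascalSeq : ℕ → ℤ → ℝ
  | 0, x => if x = -1 then 1 else 0
  | r + 1, x => if 0 ≤ x then (x.toNat.choose r : ℝ) else 0

lemma pascalSeq_succ_succ (r : ℕ) (x : ℤ) :
    pascalSeq (r + 1) (x + 1) = pascalSeq (r + 1) x + pascalSeq r x := by
  rcases lt_trichotomy x (-1) with hx | rfl | hx
  · cases r <;> simp [pascalSeq, show x ≠ -1 by omega,
      show ¬ 0 ≤ x by omega, show ¬ 0 ≤ x + 1 by omega]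
  · cases r <;> simp [pascalSeq]
  · have hx' : (x + 1).toNat = x.toNat + 1 := by omega
    cases r with
    | zero => simp [pascalSeq, show 0 ≤ x by omega, show x ≠ -1 by omega, show 0 ≤ x + 1 by omega]
    | succ r =>
      simp [pascalSeq, show 0 ≤ x by omega, show 0 ≤ x + 1 by omega, hx', Nat.choose_succ_succ,
        add_comm]

lemma pascalSeq_eq_zero {x : ℤ} (hx : x < -1) (r : ℕ) : pascalSeq r x = 0 := by
  cases r <;> simp [pascalSeq, show x ≠ -1 by omega, show ¬ 0 ≤ x by omega]

lemma pow_div_factorial_le_pascalSeq {r m : ℕ} {x : ℤ} (hx : (m + r : ℤ) ≤ x) :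
    (m : ℝ) ^ r / r.factorial ≤ pascalSeq (r + 1) x := by
  rw [pascalSeq, if_pos (by omega)]
  refine le_trans ?_ (Nat.pow_le_choose r x.toNat)
  gcongr
  exact_mod_cast (by omega : m ≤ x.toNat + 1 - r)

lemma Dline_snd_bounds {m ℓ : ℕ} {h : ℤ} {s : Fin (2 ^ m)} {q : ℤ × ℕ} (hq : q ∈ Dline m ℓ h s) :
    ℓ * 2 ^ m ≤ q.2 ∧ q.2 < (ℓ + 1) * 2 ^ m := by
  induction m generalizing ℓ h with
  | zero => simp_all [Dline]
  | succ m ih =>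
    rw [Dline, Finset.mem_union] at hq
    rcases hq with hq | hq
    · have := ih hq; rw [pow_succ]; constructor <;> nlinarith
    · have := ih hq; rw [pow_succ]; constructor <;> nlinarith

lemma Dline_disjoint (m ℓ : ℕ) (h h' : ℤ) (s s' : Fin (2 ^ m)) :
    Disjoint (Dline m (2 * ℓ) h s) (Dline m (2 * ℓ + 1) h' s') :=
  Finset.disjoint_left.2 fun _ hq hq' => by
    have := Dline_snd_bounds hq; have := Dline_snd_bounds hq'; nlinarith

theorem sum_Dline_pascal {F : ℕ → ℤ → ℝ} (hF : ∀ r x, F (r + 1) (x + 1) = F (r + 1) x + F r x)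
    {m r : ℕ} (hmr : m ≤ r) (ℓ : ℕ) (h : ℤ) (s : Fin (2 ^ m)) :
    ∑ q ∈ Dline m ℓ h s, (-1 : ℝ) ^ bitSum q.2 * F r (q.1 - q.2 + bitSum q.2) =
      if (s : ℕ) = 2 ^ m - 1 then
        (-1) ^ (m + bitSum ℓ) * F (r - m) (h - ℓ * 2 ^ m + bitSum ℓ) else 0 := by
  induction m generalizing ℓ h with
  | zero => simp [Dline]
  | succ m ih =>
    have hhalf_def : (halfIdx s : ℕ) = s / 2 := rfl
    have hslt : (s : ℕ) < 2 * 2 ^ m := by rw [← pow_succ']; exact s.isLt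
    rw [Dline, Finset.sum_union (Dline_disjoint ..), ih (by omega), ih (by omega),
      bitSum_two_mul, bitSum_two_mul_add_one]
    by_cases hhalf : (halfIdx s : ℕ) = 2 ^ m - 1
    · have hX₁ : h - (2 * ℓ : ℕ) * 2 ^ m + bitSum ℓ = h - ℓ * 2 ^ (m + 1) + bitSum ℓ := by
        push_cast; ring
      have hX₂ : h + (halfIdx s : ℕ) + (s % 2 : ℕ) - (2 * ℓ + 1 : ℕ) * 2 ^ m + (bitSum ℓ + 1 : ℕ)
          = h - ℓ * 2 ^ (m + 1) + bitSum ℓ + (s % 2 : ℕ) := by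
        rw [hhalf]; push_cast [Nat.one_le_two_pow]; ring
      rw [if_pos hhalf, if_pos hhalf, hX₁, hX₂]
      obtain ⟨r, rfl⟩ : ∃ r', r = r' + m + 1 := ⟨r - m - 1, by omega⟩
      rcases Nat.mod_two_eq_zero_or_one s with hodd | hodd
      · rw [if_neg (by omega), hodd]; push_cast; rw [add_zero]; ring
      · rw [if_pos (by omega), hodd, show r + m + 1 - m = r + 1 by omega,
          show r + m + 1 - (m + 1) = r by omega]
        push_cast; rw [hF]; ring
    · rw [if_neg hhalf, if_neg hhalf, if_neg (by omega)]; simp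

lemma sum_Dline_top {M : Type*} [AddCommMonoid M] (φ : ℤ × ℕ → M) {m : ℕ} (ℓ : ℕ) (h : ℤ)
    {s : Fin (2 ^ m)} (hs : (s : ℕ) = 2 ^ m - 1) :
    ∑ q ∈ Dline m ℓ h s, φ q = ∑ j ∈ Finset.range (2 ^ m), φ (h + j, ℓ * 2 ^ m + j) := by
  induction m generalizing ℓ h with
  | zero => simp [Dline]
  | succ m ih =>
    have hhalf : (halfIdx s : ℕ) = 2 ^ m - 1 := by
      change (s : ℕ) / 2 = _; rw [hs, pow_succ]; have := Nat.one_le_two_pow (n := m); omega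
    have hodd : (s : ℕ) % 2 = 1 := by
      rw [hs, pow_succ]; have := Nat.one_le_two_pow (n := m); omega
    rw [Dline, Finset.sum_union (Dline_disjoint ..), ih _ _ hhalf, ih _ _ hhalf, hhalf, hodd]
    conv_rhs => rw [pow_succ, mul_two, Finset.sum_range_add]
    congr 1 <;> refine Finset.sum_congr rfl fun j _ => ?_ <;> congr 2
    · ring
    · push_cast [Nat.one_le_two_pow]; ring
    · ring

lemma Radon_level_zero {n : ℕ} (G : ℤ × Fin (2 ^ n) → ℝ) : Radon n 0 G = G := by
  funext ⟨h, s⟩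
  simp [Radon, DlineG, Dline, fext]

lemma Radon_sum {n m : ℕ} {ι : Type*} (S : Finset ι) (G : ι → ℤ × Fin (2 ^ n) → ℝ) :
    Radon n m (∑ c ∈ S, G c) = ∑ c ∈ S, Radon n m (G c) := by
  have hfext : ∀ q, fext (∑ c ∈ S, G c) q = ∑ c ∈ S, fext (G c) q := by
    intro q; unfold fext; split_ifs <;> simp
  funext p
  simp only [Radon, Finset.sum_apply, hfext]
  exact Finset.sum_comm

def topSlope (n : ℕ) : Fin (2 ^ n) := ⟨2 ^ n - 1, Nat.sub_lt (Nat.two_pow_pos n) one_pos⟩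

lemma Radon_apply_topSlope {n : ℕ} (G : ℤ × Fin (2 ^ n) → ℝ) (h : ℤ) :
    Radon n n G (h, topSlope n) = ∑ j : Fin (2 ^ n), G (h + j, j) := by
  have hs : (topSlope n : ℕ) / 2 ^ n = 0 := Nat.div_eq_of_lt (topSlope n).isLt
  simp only [Radon, DlineG, hs]
  rw [sum_Dline_top _ _ _ (Nat.mod_eq_of_lt (topSlope n).isLt), ← Fin.sum_univ_eq_sum_range]
  simp [fext]

lemma Radon_cutoff_sub_Radon {n : ℕ} (G : ℤ × Fin (2 ^ n) → ℝ) {K : ℤ} (hK : 2 ^ n - 1 ≤ K) :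
    Radon n n (fun q => (if 0 ≤ q.1 ∧ q.1 < K then 1 else 0) * G q) (K - (2 ^ n - 1), topSlope n)
      - Radon n n G (K - (2 ^ n - 1), topSlope n) = -G (K, topSlope n) := by
  rw [Radon_apply_topSlope, Radon_apply_topSlope, ← Finset.sum_sub_distrib,
    Fintype.sum_eq_single (topSlope n)]
  · simp [topSlope, Nat.one_le_two_pow]
  · intro j hj
    have hlt : (j : ℕ) + 1 < 2 ^ n := by
      have : (j : ℕ) ≠ 2 ^ n - 1 := fun h => hj (Fin.ext h)
      have := j.isLt; omega
    have hj' : ((j + 1 : ℕ) : ℤ) < 2 ^ n := by exact_mod_cast hlt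
    rw [if_pos ⟨by omega, by omega⟩]
    ring

def deltaPreimage (n : ℕ) (c : ℤ) : ℤ × Fin (2 ^ n) → ℝ :=
  fun p => (-1) ^ (n + bitSum p.2) * pascalSeq n (p.1 - p.2 + bitSum p.2 - c - 1)

theorem Radon_deltaPreimage (n : ℕ) (c : ℤ) :
    Radon n n (deltaPreimage n c) = deltaImg c (topSlope n) := by
  funext ⟨h, s⟩
  have hF : ∀ r x, pascalSeq (r + 1) (x + 1 - c - 1) =
      pascalSeq (r + 1) (x - c - 1) + pascalSeq r (x - c - 1) := fun r x => by
    rw [← pascalSeq_succ_succ]; ring_nf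
  have hterm : ∀ q ∈ Dline n 0 h s, fext (deltaPreimage n c) q =
      (-1) ^ n * ((-1) ^ bitSum q.2 * pascalSeq n (q.1 - q.2 + bitSum q.2 - c - 1)) := by
    intro q hq
    have := (Dline_snd_bounds hq).2
    simp only [fext, deltaPreimage, dif_pos (by simpa using this), pow_add]
    ring
  simp only [Radon, DlineG, Nat.div_eq_of_lt s.isLt, Nat.mod_eq_of_lt s.isLt, Fin.eta]
  rw [Finset.sum_congr rfl hterm, ← Finset.mul_sum,
    sum_Dline_pascal (F := fun r x => pascalSeq r (x - c - 1)) hF le_rfl]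
  have hsign : (-1 : ℝ) ^ (n + n) = 1 := Even.neg_one_pow ⟨n, rfl⟩
  simp [deltaImg, topSlope, pascalSeq, Fin.ext_iff, sub_eq_zero, ← pow_add, hsign, ← ite_and,
    and_comm]

lemma deltaPreimage_eq_zero_of_lt {n : ℕ} {c i : ℤ} (hi : i < c) (j : Fin (2 ^ n)) :
    deltaPreimage n c (i, j) = 0 := by
  have := bitSum_le (j : ℕ)
  simp only [deltaPreimage]
  rw [pascalSeq_eq_zero (by omega), mul_zero]

lemma pow_div_factorial_le_deltaPreimage {r m : ℕ} {c y : ℤ} (hy : m + 2 ^ (r + 1) + c ≤ y + 1) :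
    (m : ℝ) ^ r / r.factorial ≤ deltaPreimage (r + 1) c (y, topSlope (r + 1)) := by
  have hsign : (-1 : ℝ) ^ (r + 1 + bitSum (2 ^ (r + 1) - 1)) = 1 := by
    rw [bitSum_two_pow_sub_one]; exact Even.neg_one_pow ⟨r + 1, rfl⟩
  simp only [deltaPreimage, topSlope, hsign, one_mul]
  refine pow_div_factorial_le_pascalSeq ?_
  push_cast [Nat.one_le_two_pow, bitSum_two_pow_sub_one]
  omega

lemma BddBelowSupp.finset_sum {k : ℕ} {ι : Type*} {S : Finset ι} {G : ι → ℤ × Fin k → ℝ}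
    (hG : ∀ c ∈ S, BddBelowSupp (G c)) : BddBelowSupp (∑ c ∈ S, G c) := by
  classical
  induction S using Finset.induction_on with
  | empty => exact ⟨0, by simp⟩
  | insert a S ha ih =>
    obtain ⟨b₁, hb₁⟩ := hG a (Finset.mem_insert_self a S)
    obtain ⟨b₂, hb₂⟩ := ih fun c hc => hG c (Finset.mem_insert_of_mem hc)
    refine ⟨min b₁ b₂, fun i hi j => ?_⟩
    rw [Finset.sum_insert ha, Pi.add_apply, hb₁ i (hi.trans (min_le_left _ _)) j,
      hb₂ i (hi.trans (min_le_right _ _)) j, add_zero]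

lemma bddBelowSupp_deltaImg {k : ℕ} (c : ℤ) (s : Fin k) : BddBelowSupp (deltaImg c s) :=
  ⟨c - 1, fun i hi j => if_neg fun h => by simp only [Prod.mk.injEq] at h; omega⟩

lemma bddBelowSupp_deltaPreimage (n : ℕ) (c : ℤ) : BddBelowSupp (deltaPreimage n c) :=
  ⟨c - 1, fun _ hi j => deltaPreimage_eq_zero_of_lt (by omega) j⟩

lemma sum_deltaImg_apply {k : ℕ} (S : Finset ℤ) (s : Fin k) (p : ℤ × Fin k) :
    (∑ c ∈ S, deltaImg c s) p = if p.1 ∈ S ∧ p.2 = s then 1 else 0 := by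
  obtain ⟨i, j⟩ := p
  by_cases hj : j = s
  · subst hj; simp [deltaImg, Finset.sum_ite_eq]
  · simp [deltaImg, hj]

lemma abs_sum_deltaImg_apply_le_one {k : ℕ} (S : Finset ℤ) (s : Fin k) (p : ℤ × Fin k) :
    |(∑ c ∈ S, deltaImg c s) p| ≤ 1 := by
  rw [sum_deltaImg_apply]; split_ifs <;> norm_num

/-- The cutoff-composed operator `R^n ∘ 𝟙_k ∘ (R^n)⁻¹` fails to approximate the
identity: for any inverse `Rinv` of the ADRT on half-strip images, there is
`c > 0` (depending only on `n`) such that for every `k ≥ 1` some image `f` with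
`‖f‖_∞ ≤ 1` witnesses a deviation of size at least `c·k^n`. -/
theorem Radon_cutoff_not_identity (n : ℕ)
    (Rinv : (ℤ × Fin (2 ^ n) → ℝ) → (ℤ × Fin (2 ^ n) → ℝ))
    (hinv : ∀ f, BddBelowSupp f →
      Radon n n (Rinv f) = f ∧ Rinv (Radon n n f) = f ∧ BddBelowSupp (Rinv f)) :
    ∃ c : ℝ, 0 < c ∧ ∀ k : ℕ, 1 ≤ k →
      ∃ f : ℤ × Fin (2 ^ n) → ℝ, BddBelowSupp f ∧ (∀ p, |f p| ≤ 1) ∧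
        ∃ p : ℤ × Fin (2 ^ n),
          c * (k : ℝ) ^ n ≤
            |Radon n n
                (fun q => (if 0 ≤ q.1 ∧ q.1 < ((k + 1) * 2 ^ n : ℤ) then 1 else 0)
                  * Rinv f q) p
              - f p| := by
  rcases n with _ | r
  · refine ⟨1, one_pos, fun k _ => ⟨∑ c ∈ {-1}, deltaImg c 0,
      BddBelowSupp.finset_sum fun c _ => bddBelowSupp_deltaImg c 0,
      abs_sum_deltaImg_apply_le_one _ _, (-1, 0), ?_⟩⟩
    simp [Radon_level_zero, deltaImg]
  refine ⟨(r.factorial : ℝ)⁻¹, by positivity, fun k hk => ?_⟩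
  set S := Finset.Ioc (-(k : ℤ)) 0
  set g := ∑ c ∈ S, deltaPreimage (r + 1) c
  have hg : BddBelowSupp g := BddBelowSupp.finset_sum fun c _ => bddBelowSupp_deltaPreimage _ c
  have hRg : Radon (r + 1) (r + 1) g = ∑ c ∈ S, deltaImg c (topSlope (r + 1)) := by
    simp only [g, Radon_sum, Radon_deltaPreimage]
  refine ⟨Radon (r + 1) (r + 1) g, ?_, ?_, (((k + 1) * 2 ^ (r + 1) : ℤ) - (2 ^ (r + 1) - 1),
    topSlope (r + 1)), ?_⟩
  · rw [hRg]; exact BddBelowSupp.finset_sum fun c _ => bddBelowSupp_deltaImg c _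
  · rw [hRg]; exact abs_sum_deltaImg_apply_le_one _ _
  have hpow : (1 : ℤ) ≤ 2 ^ (r + 1) := one_le_pow₀ one_le_two
  rw [(hinv g hg).2.1, Radon_cutoff_sub_Radon g (by nlinarith), abs_neg]
  calc (r.factorial : ℝ)⁻¹ * k ^ (r + 1) = ∑ c ∈ S, (k : ℝ) ^ r / r.factorial := by
        simp only [S, Finset.sum_const, Int.card_Ioc, sub_neg_eq_add, zero_add, Int.toNat_natCast,
          nsmul_eq_mul]
        ring
    _ ≤ ∑ c ∈ S, deltaPreimage (r + 1) c (((k + 1) * 2 ^ (r + 1) : ℤ), topSlope (r + 1)) :=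
        Finset.sum_le_sum fun c hc => pow_div_factorial_le_deltaPreimage (by
          simp only [S, Finset.mem_Ioc] at hc; nlinarith)
    _ = g (((k + 1) * 2 ^ (r + 1) : ℤ), topSlope (r + 1)) := (Finset.sum_apply _ _ _).symm
    _ ≤ _ := le_abs_self _
end

section
/- Let g be an image supported in the finite trapezoidal set E_q = {(h, s) : s ∈ {2q, 2q+1}, −s ≤ h ≤ 2^n − 1}, which has 2·2^n + 4q + 1 points. Then g lies in the span of the 2·2^n + 4q images {φ_{p,q} : −2q ≤ p ≤ 2^n − 1} ∪ {ψ_{p,q} : −2q ≤ p ≤ 2^n − 1} if and only if g · μ_q = 0, i.e. Σ_{h=−2q}^{2^n−1} g(h, 2q) = Σ_{h=−2q−1}^{2^n−1} g(h, 2q+1). -/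
private lemma Icc_int_insert_top {a b : ℤ} (h : a ≤ b + 1) :
    Finset.Icc a (b + 1) = insert (b + 1) (Finset.Icc a b) := by
  ext x; simp only [Finset.mem_Icc, Finset.mem_insert]; omega

private lemma sum_Icc_int_succ_top {a b : ℤ} (h : a ≤ b + 1) (f : ℤ → ℝ) :
    ∑ x ∈ Finset.Icc a (b + 1), f x = (∑ x ∈ Finset.Icc a b, f x) + f (b + 1) := by
  rw [Icc_int_insert_top h, Finset.sum_insert (by simp)]
  ring

private lemma sum_delta_row {k : ℕ} (S : Finset ℤ) (p : ℤ) (s t : Fin k) :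
    ∑ h ∈ S, deltaImg p s (h, t) = if p ∈ S ∧ t = s then 1 else 0 := by
  simp only [deltaImg, Prod.mk.injEq]
  rcases eq_or_ne t s with hts | hts
  · subst hts
    simp only [and_true]
    rw [show (∑ h ∈ S, if h = p then (1:ℝ) else 0)
        = ∑ h ∈ S, if h = p then (fun _ : ℤ => (1:ℝ)) h else 0 from rfl,
      Finset.sum_ite_eq' S p (fun _ => (1:ℝ))]
  · simp [hts]

private lemma sum_if_swap (S : Finset ℤ) (b : ℤ) (w : ℤ → ℝ) :
    ∑ p ∈ S, (if b = p then w p else 0) = if b ∈ S then w b else 0 := by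
  rw [← Finset.sum_ite_eq' S b w]
  refine Finset.sum_congr rfl fun p _ => ?_
  congr 1
  exact propext eq_comm

private lemma sum_if_pred (S : Finset ℤ) (b : ℤ) (w : ℤ → ℝ) :
    ∑ p ∈ S, (if b = p - 1 then w p else 0) = if b + 1 ∈ S then w (b + 1) else 0 := by
  rw [← Finset.sum_ite_eq' S (b + 1) w]
  refine Finset.sum_congr rfl fun p _ => ?_
  congr 1
  exact propext ⟨fun h => by omega, fun h => by omega⟩

/-- An image `g` supported in the trapezoid
`E_q = {(h,s) : s ∈ {2q, 2q+1}, −s ≤ h ≤ 2^n−1}` (which has `2·2^n + 4q + 1`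
points) lies in the span of the `2·2^n + 4q` images
`{φ_{p,q} : −2q ≤ p ≤ 2^n−1} ∪ {ψ_{p,q} : −2q ≤ p ≤ 2^n−1}` if and only if its
row sums agree: `Σ_{h=−2q}^{2^n−1} g(h,2q) = Σ_{h=−2q−1}^{2^n−1} g(h,2q+1)`. -/
theorem trapezoid_span_iff_mass (n q : ℕ) (hq : 2 * q + 1 < 2 ^ n)
    (r0 r1 : Fin (2 ^ n)) (hr0 : (r0 : ℕ) = 2 * q) (hr1 : (r1 : ℕ) = 2 * q + 1)
    (g : ℤ × Fin (2 ^ n) → ℝ)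
    (hsupp : ∀ (h : ℤ) (s : Fin (2 ^ n)), g (h, s) ≠ 0 →
      (s = r0 ∧ -(2 * q : ℤ) ≤ h ∧ h ≤ (2 ^ n : ℤ) - 1) ∨
      (s = r1 ∧ -(2 * q : ℤ) - 1 ≤ h ∧ h ≤ (2 ^ n : ℤ) - 1)) :
    g ∈ Submodule.span ℝ
        {f : ℤ × Fin (2 ^ n) → ℝ |
          ∃ p : ℤ, -(2 * q : ℤ) ≤ p ∧ p ≤ (2 ^ n : ℤ) - 1 ∧
            (f = (fun x => deltaImg p r0 x + deltaImg p r1 x) ∨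
             f = (fun x => deltaImg p r0 x + deltaImg (p - 1) r1 x))}
      ↔ ∑ᶠ h ∈ Set.Icc (-(2 * q : ℤ)) ((2 ^ n : ℤ) - 1), g (h, r0)
          = ∑ᶠ h ∈ Set.Icc (-(2 * q : ℤ) - 1) ((2 ^ n : ℤ) - 1), g (h, r1) := by
  have hr01 : r0 ≠ r1 := by
    intro h; rw [h] at hr0; omega
  set a : ℤ := -(2 * q : ℤ) with ha
  set N : ℤ := (2 ^ n : ℤ) - 1 with hN
  have haN : a ≤ N := by
    have h2 : ((2 * q + 1 : ℕ) : ℤ) < ((2 ^ n : ℕ) : ℤ) := by exact_mod_cast hq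
    push_cast at h2
    simp only [ha, hN]
    omega
  clear hq hr0 hr1
  clear_value a N
  clear ha hN
  -- convert finsums to finset sums
  have e0 : (∑ᶠ h ∈ Set.Icc a N, g (h, r0)) = ∑ h ∈ Finset.Icc a N, g (h, r0) := by
    rw [← Finset.coe_Icc, finsum_mem_coe_finset]
  have e1 : (∑ᶠ h ∈ Set.Icc (a - 1) N, g (h, r1)) = ∑ h ∈ Finset.Icc (a - 1) N, g (h, r1) := by
    rw [← Finset.coe_Icc, finsum_mem_coe_finset]
  rw [e0, e1]
  constructor
  · -- forward direction
    intro hmem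
    clear hsupp e0 e1
    induction hmem using Submodule.span_induction with
    | mem f hf =>
      obtain ⟨p, hp1, hp2, hf | hf⟩ := hf <;> subst hf <;>
      · have m1 : p ∈ Finset.Icc a N := Finset.mem_Icc.mpr ⟨hp1, hp2⟩
        have m2 : p ∈ Finset.Icc (a - 1) N := Finset.mem_Icc.mpr ⟨by omega, hp2⟩
        have m3 : p - 1 ∈ Finset.Icc (a - 1) N := Finset.mem_Icc.mpr ⟨by omega, by omega⟩
        simp [Finset.sum_add_distrib, sum_delta_row, m1, m2, m3, hr01, hr01.symm]
    | zero => simp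
    | add x y hx hy ihx ihy =>
      simp only [Pi.add_apply, Finset.sum_add_distrib, ihx, ihy]
    | smul r x hx ihx =>
      simp only [Pi.smul_apply, smul_eq_mul, ← Finset.mul_sum, ihx]
  · -- reverse direction
    intro hmass
    set d : ℤ → ℝ := fun p =>
      (∑ h ∈ Finset.Icc (a - 1) (p - 1), g (h, r1)) - ∑ h ∈ Finset.Icc a (p - 1), g (h, r0)
      with hd
    set c : ℤ → ℝ := fun p => g (p, r0) - d p with hc
    have hdstep : ∀ h : ℤ, a ≤ h → d (h + 1) = d h + g (h, r1) - g (h, r0) := by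
      intro h hh
      have e1 : (h + 1 : ℤ) - 1 = (h - 1) + 1 := by ring
      simp only [hd, e1]
      rw [sum_Icc_int_succ_top (by omega : a - 1 ≤ (h-1)+1), sum_Icc_int_succ_top (by omega : a ≤ (h-1)+1)]
      simp only [sub_add_cancel]
      ring
    have key : g = ∑ p ∈ Finset.Icc a N,
        (c p • (fun x => deltaImg p r0 x + deltaImg p r1 x)
          + d p • (fun x => deltaImg p r0 x + deltaImg (p - 1) r1 x)) := by
      funext x
      obtain ⟨h, s⟩ := x
      rw [Finset.sum_apply]
      simp only [Pi.add_apply, Pi.smul_apply, smul_eq_mul, deltaImg, Prod.mk.injEq]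
      rcases eq_or_ne s r0 with hs0 | hs0
      · simp only [hs0, hr01, Ne.symm hr01, and_true, and_false, if_false, add_zero, mul_ite,
          mul_one, mul_zero, and_self, if_true]
        rw [Finset.sum_add_distrib, sum_if_swap, sum_if_swap]
        by_cases hm : h ∈ Finset.Icc a N
        · rw [if_pos hm, if_pos hm]
          simp [hc]
        · rw [if_neg hm, if_neg hm, add_zero]
          by_contra hne
          rcases hsupp h r0 (by simpa using hne) with ⟨_, h2, h3⟩ | ⟨h1, _, _⟩
          · exact hm (Finset.mem_Icc.mpr ⟨h2, h3⟩)
          · exact hr01 h1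
      · rcases eq_or_ne s r1 with hs1 | hs1
        · simp only [hs1, hr01, Ne.symm hr01, and_true, and_false, if_false, zero_add, mul_ite,
            mul_one, mul_zero, add_zero, and_self, if_true]
          rw [Finset.sum_add_distrib, sum_if_swap, sum_if_pred]
          by_cases hm1 : h ∈ Finset.Icc a N <;> by_cases hm2 : h + 1 ∈ Finset.Icc a N
          · -- a ≤ h ≤ N - 1
            rw [if_pos hm1, if_pos hm2]
            rw [hdstep h (by rw [Finset.mem_Icc] at hm1; omega)]
            simp only [hc]
            ring
          · -- h = N
            rw [Finset.mem_Icc] at hm1 hm2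
            have hhN : h = N := by omega
            subst hhN
            rw [if_pos (Finset.mem_Icc.mpr ⟨hm1.1, hm1.2⟩), if_neg (by rw [Finset.mem_Icc]; omega),
              add_zero]
            have eN0 := sum_Icc_int_succ_top (a := a) (b := h - 1)
              (by omega) (fun x => g (x, r0))
            have eN1 := sum_Icc_int_succ_top (a := a - 1) (b := h - 1)
              (by omega) (fun x => g (x, r1))
            simp only [sub_add_cancel] at eN0 eN1
            simp only [hc, hd]
            rw [eN0, eN1] at hmass
            linarith
          · -- h = a - 1
            rw [Finset.mem_Icc] at hm1 hm2
            have hha : h = a - 1 := by omega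
            subst hha
            rw [if_neg (by rw [Finset.mem_Icc]; omega),
              if_pos (Finset.mem_Icc.mpr ⟨by omega, by omega⟩), zero_add]
            simp only [hd]
            rw [show a - 1 + 1 - 1 = a - 1 by ring, Finset.Icc_self, Finset.sum_singleton,
              Finset.Icc_eq_empty (by omega), Finset.sum_empty]
            ring
          · -- outside
            rw [Finset.mem_Icc] at hm1 hm2
            rw [if_neg (by rw [Finset.mem_Icc]; omega), if_neg (by rw [Finset.mem_Icc]; omega),
              add_zero]
            by_contra hne
            rcases hsupp h r1 (by simpa using hne) with ⟨h1, _, _⟩ | ⟨_, h2, h3⟩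
            · exact hr01 h1.symm
            · omega
        · simp only [hs0, hs1, and_false, if_false, add_zero, mul_zero, Finset.sum_const_zero]
          by_contra hne
          rcases hsupp h s (by simpa using hne) with ⟨h1, _⟩ | ⟨h1, _⟩
          · exact hs0 h1
          · exact hs1 h1
    rw [key]
    apply Submodule.sum_mem
    intro p hp
    rw [Finset.mem_Icc] at hp
    refine Submodule.add_mem _ (Submodule.smul_mem _ _ ?_) (Submodule.smul_mem _ _ ?_) <;>
      exact Submodule.subset_span ⟨p, hp.1, hp.2, by simp⟩
end
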